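/- Let q be a prime power and let k, n, m be integers with 1 < k < n and m < n ≤ km. Set t = ⌊(km − n)/m⌋ and a = n − (k − t − 2)m. Then there exists a nondegenerate full weight spectrum (FWS) [n,k]_{q^m/q} rank-metric code, i.e., a nondegenerate [n,k]_{q^m/q} code C with WS(C) = {1, 2, …, m}, if and only if a < 2^{t+2}. -/

import Mathlib

/-- The rank weight of a vector `v ∈ L^n`, where `L/K` is a field extension:
the `K`-dimension of the `K`-span of the entries of `v`. -/
noncomputable def rankWeight (K : Type*) [Field K] {L : Type*} [Field L] [Algebra K L]
    {n : ℕ} (v : Fin n → L) : ℕ :=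
  Module.finrank K (Submodule.span K (Set.range v))

/-- The weight spectrum of a rank-metric code `C ⊆ L^n`: the set of rank weights of its
nonzero codewords. -/
noncomputable def weightSpectrum (K : Type*) [Field K] {L : Type*} [Field L] [Algebra K L]
    {n : ℕ} (C : Submodule L (Fin n → L)) : Set ℕ :=
  {w | ∃ c ∈ C, c ≠ 0 ∧ rankWeight K c = w}

/-- A rank-metric code `C ⊆ L^n` is nondegenerate if for every nonzero `x ∈ K^n` there is a
codeword `c ∈ C` with `∑ j, x j • c j ≠ 0`. -/
def IsNondegenerate (K : Type*) [Field K] {L : Type*} [Field L] [Algebra K L]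
    {n : ℕ} (C : Submodule L (Fin n → L)) : Prop :=
  ∀ x : Fin n → K, x ≠ 0 → ∃ c ∈ C, (∑ j, x j • c j) ≠ 0

/-!
Let `2 ^ r ≤ m < 2 ^ (r + 1)`. A codeword in the `L`-span of a set `s` of codewords has rank
weight at most the sum of the weights in `s`, so an FWS code contains linearly independent
codewords of weights `1, 2, …, 2 ^ r`. Extend them to a basis `B` of `C`: nondegeneracy makes
`x ↦ (∑ j, x j • v j)_{v ∈ B}` injective on `K^n`, whence
`n ≤ ∑_{v ∈ B} w(v) ≤ (2 ^ (r + 1) - 1) + (k - r - 1) m`.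

Conversely, under this bound (and `k ≤ n`) there are `k` nonempty subsets of `{0, …, m - 1}` of
total size `n` whose unions take every size `1, …, m`: disjoint blocks whose sizes form a complete
sequence, a top interval overlapping them, and further intervals as padding. If the `i`-th
generator carries one basis vector of `L/K` for each element of the `i`-th subset, then
`∑_{i ∈ S} g_i` has rank weight the size of the union over `S`.

Writing `km - n = tm + s` with `s < m`, one has `a = 2m - s`, and `a < 2 ^ (t + 2)` is the bound
above.
-/

open Finset

section Blocks

variable {P : ℕ → ℕ}

def consecutiveBlock (P : ℕ → ℕ) (j : ℕ) : Finset ℕ := Ico (P j) (P (j + 1))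

lemma card_consecutiveBlock (j : ℕ) : (consecutiveBlock P j).card = P (j + 1) - P j :=
  Nat.card_Ico _ _

lemma consecutiveBlock_subset_range (hP : Monotone P) {j u : ℕ} (hj : j < u) :
    consecutiveBlock P j ⊆ range (P u) :=
  fun x hx => by
    have := hP (show j + 1 ≤ u by omega)
    simp only [consecutiveBlock, mem_Ico] at hx
    simp only [mem_range]
    omega

lemma consecutiveBlock_inter_range (P : ℕ → ℕ) (M j : ℕ) :
    consecutiveBlock P j ∩ range M = consecutiveBlock (fun i => min (P i) M) j := by
  ext x
  simp only [consecutiveBlock, mem_inter, mem_Ico, mem_range]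
  omega

lemma card_biUnion_consecutiveBlock (hP : Monotone P) (T : Finset ℕ) :
    (T.biUnion (consecutiveBlock P)).card = ∑ j ∈ T, (P (j + 1) - P j) := by
  rw [card_biUnion]
  · exact sum_congr rfl fun j _ => card_consecutiveBlock j
  · intro i _ j _ hij
    simp only [Function.onFun, consecutiveBlock, disjoint_left, mem_Ico]
    rcases Nat.lt_or_gt_of_ne hij with h | h <;> have := hP (show _ + 1 ≤ _ from h) <;> omega

/-- Brown's criterion for complete sequences, with the sizes `P (j + 1) - P j` realised as
disjoint blocks. -/
lemma exists_card_biUnion_consecutiveBlock (hP0 : P 0 = 0) (hP : Monotone P)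
    (hgrowth : ∀ j, P (j + 1) ≤ 2 * P j + 1) (u : ℕ) :
    ∀ w ≤ P u, ∃ T ⊆ range u, (T.biUnion (consecutiveBlock P)).card = w := by
  induction u with
  | zero => exact fun w hw => ⟨∅, empty_subset _, by simp_all⟩
  | succ u ih =>
    intro w hw
    by_cases hwu : w ≤ P u
    · obtain ⟨T, hT, hcard⟩ := ih w hwu
      exact ⟨T, hT.trans (range_subset_range.mpr u.le_succ), hcard⟩
    · obtain ⟨T, hT, hcard⟩ := ih (w - (P (u + 1) - P u)) (by have := hgrowth u; omega)
      have hu : u ∉ T := fun h => by simpa using hT h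
      refine ⟨insert u T, insert_subset (self_mem_range_succ u)
        (hT.trans (range_subset_range.mpr u.le_succ)), ?_⟩
      rw [card_biUnion_consecutiveBlock hP, sum_insert hu, ← card_biUnion_consecutiveBlock hP,
        hcard]
      have := hP (show u ≤ u + 1 by omega)
      have := hgrowth u
      omega

end Blocks

/-- The code whose `i`-th generator has, for each `a ∈ F i`, one coordinate equal to the `a`-th
basis vector of `L/K` (see `exists_code_of_family`) is a nondegenerate `[n, k]` code of weight
spectrum `{1, …, m}`. -/
structure IsFWSDesign (m n k : ℕ) (F : ℕ → Finset ℕ) : Prop where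
  subset_range : ∀ i < k, F i ⊆ range m
  nonempty : ∀ i < k, (F i).Nonempty
  sum_card : ∑ i ∈ range k, (F i).card = n
  exists_card_biUnion : ∀ w ∈ Set.Icc 1 m, ∃ T ⊆ range k, (T.biUnion F).card = w

namespace IsFWSDesign

variable {m n k : ℕ} {F : ℕ → Finset ℕ}

lemma update_range (hF : IsFWSDesign m n k F) {c : ℕ} (hc : c ∈ Set.Icc 1 m) :
    IsFWSDesign m (n + c) (k + 1) (Function.update F k (range c)) := by
  have hF_eq : ∀ i < k, Function.update F k (range c) i = F i :=
    fun i hi => Function.update_of_ne hi.ne _ _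
  obtain ⟨hc1, hcm⟩ := hc
  refine ⟨fun i hi => ?_, fun i hi => ?_, ?_, fun w hw => ?_⟩
  · rcases Nat.lt_succ_iff_lt_or_eq.mp hi with hi | rfl
    · rw [hF_eq i hi]; exact hF.subset_range i hi
    · rw [Function.update_self]; exact range_subset_range.mpr hcm
  · rcases Nat.lt_succ_iff_lt_or_eq.mp hi with hi | rfl
    · rw [hF_eq i hi]; exact hF.nonempty i hi
    · rw [Function.update_self]; exact nonempty_range_iff.mpr (by omega)
  · rw [sum_range_succ, Function.update_self, card_range, ← hF.sum_card]
    congr 1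
    exact sum_congr rfl fun i hi => by rw [hF_eq i (mem_range.mp hi)]
  · obtain ⟨T, hT, hcard⟩ := hF.exists_card_biUnion w hw
    refine ⟨T, hT.trans (range_subset_range.mpr k.le_succ), ?_⟩
    rwa [biUnion_congr rfl fun i hi => hF_eq i (mem_range.mp (hT hi))]

lemma extend (hF : IsFWSDesign m n k F) (j : ℕ) :
    ∀ N, j ≤ N → N ≤ j * m → ∃ G, IsFWSDesign m (n + N) (k + j) G := by
  induction j with
  | zero => exact fun N _ hN => ⟨F, by simpa [show N = 0 by simpa using hN] using hF⟩
  | succ j ih =>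
    intro N hjN hN
    have hm : 0 < m := Nat.pos_of_ne_zero fun h => by simp [h] at hN; omega
    set c := min m (N - j)
    have hjm : j ≤ j * m := Nat.le_mul_of_pos_right j hm
    have hmul : (j + 1) * m = j * m + m := by ring
    obtain ⟨G, hG⟩ := ih (N - c) (by omega) (by omega)
    have hG' := hG.update_range (c := c) ⟨by omega, by omega⟩
    rw [show n + (N - c) + c = n + N by omega] at hG'
    exact ⟨_, hG'⟩

end IsFWSDesign

lemma card_Ico_union_of_subset_range {X : Finset ℕ} {M m : ℕ} (hX : X ⊆ range m) :
    (Ico M m ∪ X).card = (m - M) + (X ∩ range M).card := by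
  have hsplit : Ico M m ∪ X = Ico M m ∪ (X ∩ range M) := by
    ext x
    by_cases hx : x ∈ X
    · have := mem_range.mp (hX hx)
      simp only [mem_union, mem_Ico, mem_inter, mem_range, hx, true_and, or_true, true_iff]
      omega
    · simp [hx]
  rw [hsplit, card_union_of_disjoint, Nat.card_Ico]
  exact disjoint_left.mpr fun x hx hx' => by
    simp only [mem_Ico, mem_inter, mem_range] at hx hx'; omega

/-- Blocks of a complete sequence below a top interval of length `q`: small weights come from the
blocks alone, large ones from the top interval together with the blocks cut off at `m - q`. -/
lemma isFWSDesign_update_consecutiveBlock {P : ℕ → ℕ} {m k q : ℕ} (hP0 : P 0 = 0)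
    (hP : StrictMono P) (hgrowth : ∀ j, P (j + 1) ≤ 2 * P j + 1) (hPm : P k ≤ m)
    (hq : q ∈ Set.Icc 1 m) (hqP : q ≤ P k + 1) (hmPq : m ≤ P k + q) :
    IsFWSDesign m (P k + q) (k + 1) (Function.update (consecutiveBlock P) k (Ico (m - q) m)) := by
  have hF_eq :
      ∀ i < k, Function.update (consecutiveBlock P) k (Ico (m - q) m) i = consecutiveBlock P i :=
    fun i hi => Function.update_of_ne hi.ne _ _
  have hblock_range : ∀ i < k, consecutiveBlock P i ⊆ range m :=
    fun i hi => (consecutiveBlock_subset_range hP.monotone hi).trans (range_subset_range.mpr hPm)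
  obtain ⟨hq1, hqm⟩ := hq
  refine ⟨fun i hi => ?_, fun i hi => ?_, ?_, fun w hw => ?_⟩
  · rcases Nat.lt_succ_iff_lt_or_eq.mp hi with hi | rfl
    · rw [hF_eq i hi]; exact hblock_range i hi
    · rw [Function.update_self]; exact fun x hx => by simp at hx ⊢; omega
  · rcases Nat.lt_succ_iff_lt_or_eq.mp hi with hi | rfl
    · have := hP (show i < i + 1 by omega)
      rw [hF_eq i hi, ← card_pos, card_consecutiveBlock]
      omega
    · rw [Function.update_self]; exact nonempty_Ico.mpr (by omega)
  · rw [sum_range_succ, Function.update_self, Nat.card_Ico,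
      sum_congr rfl fun i hi => by rw [hF_eq i (mem_range.mp hi), card_consecutiveBlock],
      sum_range_tsub hP.monotone, hP0]
    omega
  · obtain ⟨hw1, hwm⟩ := hw
    by_cases hwq : w < q
    · obtain ⟨T, hT, hcard⟩ :=
        exists_card_biUnion_consecutiveBlock hP0 hP.monotone hgrowth k w (by omega)
      exact ⟨T, hT.trans (range_subset_range.mpr k.le_succ), by
        rwa [biUnion_congr rfl fun i hi => hF_eq i (mem_range.mp (hT hi))]⟩
    · set M := m - q
      obtain ⟨T, hT, hcard⟩ := exists_card_biUnion_consecutiveBlock (P := fun i => min (P i) M)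
        (by simp [hP0]) (hP.monotone.min monotone_const)
        (fun j => by have := hgrowth j; omega) k (w - q) (by omega)
      have hk : k ∉ T := fun h => by simpa using hT h
      refine ⟨insert k T, insert_subset (self_mem_range_succ k)
        (hT.trans (range_subset_range.mpr k.le_succ)), ?_⟩
      rw [biUnion_insert, Function.update_self,
        biUnion_congr rfl fun i hi => hF_eq i (mem_range.mp (hT hi)),
        card_Ico_union_of_subset_range
          (biUnion_subset.mpr fun i hi => hblock_range i (mem_range.mp (hT hi))),
        biUnion_inter, biUnion_congr rfl fun i _ => consecutiveBlock_inter_range P M i, hcard]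
      omega

lemma exists_isFWSDesign_of_lt_two_pow {m n k : ℕ} (hkm : k + 1 ≤ m) (hmn : m ≤ n)
    (hn : n < 2 ^ (k + 1)) (hnm : n < 2 * m) :
    ∃ F, IsFWSDesign m n (k + 1) F := by
  -- the fastest growth allowed by completeness, capped so that every block stays nonempty
  set P : ℕ → ℕ := fun j => min (2 ^ j - 1) (m + j - (k + 1))
  have hP_apply (j : ℕ) : P j = min (2 ^ j - 1) (m + j - (k + 1)) := rfl
  have hP_succ (j : ℕ) : P (j + 1) = min (2 ^ j * 2 - 1) (m + j + 1 - (k + 1)) := by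
    rw [hP_apply, pow_succ]; omega
  have hPk : P k = min (2 ^ k - 1) (m - 1) := by rw [hP_apply]; omega
  rw [pow_succ] at hn
  have hdesign := isFWSDesign_update_consecutiveBlock (P := P) (m := m) (k := k) (q := n - P k)
    (by simp [P]) (strictMono_nat_of_lt_succ fun j => by
      have := Nat.one_le_two_pow (n := j); rw [hP_succ, hP_apply]; omega)
    (fun j => by rw [hP_succ, hP_apply]; omega) (by omega) ⟨by omega, by omega⟩ (by omega)
    (by omega)
  rw [show P k + (n - P k) = n by omega] at hdesign
  exact ⟨_, hdesign⟩

lemma exists_isFWSDesign {m n k r : ℕ} (hr : 2 ^ r ≤ m) (hr' : m < 2 ^ (r + 1))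
    (hrk : r + 1 ≤ k) (hkn : k ≤ n) (hmn : m ≤ n)
    (hn : n ≤ (k - (r + 1)) * m + (2 ^ (r + 1) - 1)) :
    ∃ F, IsFWSDesign m n k F := by
  have hm : 1 ≤ m := le_trans Nat.one_le_two_pow hr
  have hpow : 2 ^ (r + 1) = 2 ^ r * 2 := pow_succ 2 r
  by_cases hk : k - (r + 1) ≤ n - m
  · set n₀ := min (2 ^ (r + 1) - 1) (n - (k - (r + 1)))
    have hrm : r + 1 ≤ m := le_trans Nat.lt_two_pow_self hr
    obtain ⟨F, hF⟩ := exists_isFWSDesign_of_lt_two_pow hrm (n := n₀) (by omega) (by omega)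
      (by omega)
    have hjm : k - (r + 1) ≤ (k - (r + 1)) * m := Nat.le_mul_of_pos_right _ hm
    obtain ⟨G, hG⟩ := hF.extend (k - (r + 1)) (n - n₀) (by omega) (by omega)
    rw [show n₀ + (n - n₀) = n by omega, show r + 1 + (k - (r + 1)) = k by omega] at hG
    exact ⟨G, hG⟩
  · set k₀ := k - (n - m) - 1
    have hk₀ : 2 ^ (r + 1) ≤ 2 ^ (k₀ + 1) := Nat.pow_le_pow_right two_pos (by omega)
    obtain ⟨F, hF⟩ := exists_isFWSDesign_of_lt_two_pow (k := k₀) (n := m) (by omega) le_rfl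
      (by omega) (by omega)
    obtain ⟨G, hG⟩ := hF.extend (n - m) (n - m) le_rfl (Nat.le_mul_of_pos_right _ hm)
    rw [show m + (n - m) = n by omega, show k₀ + 1 + (n - m) = k by omega] at hG
    exact ⟨G, hG⟩

section RankWeight

open Module Submodule

variable {K L : Type*} [Field K] [Field L] [Algebra K L] {n : ℕ}

lemma rankWeight_zero : rankWeight K (0 : Fin n → L) = 0 := by
  rw [rankWeight, span_eq_bot.mpr, finrank_bot]
  rintro _ ⟨j, rfl⟩
  rfl

variable [FiniteDimensional K L]

lemma rankWeight_le_finrank (v : Fin n → L) : rankWeight K v ≤ finrank K L :=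
  finrank_le _

lemma rankWeight_pos {v : Fin n → L} (hv : v ≠ 0) : 0 < rankWeight K v := by
  obtain ⟨j, hj⟩ := Function.ne_iff.mp hv
  refine finrank_pos_iff.mpr ⟨⟨⟨v j, subset_span (Set.mem_range_self j)⟩, 0, ?_⟩⟩
  simpa [Subtype.ext_iff] using hj

lemma weightSpectrum_subset_Icc (C : Submodule L (Fin n → L)) :
    weightSpectrum K C ⊆ Set.Icc 1 (finrank K L) := by
  rintro _ ⟨c, -, hc, rfl⟩
  exact ⟨rankWeight_pos hc, rankWeight_le_finrank c⟩

lemma rankWeight_add_le (u v : Fin n → L) :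
    rankWeight K (u + v) ≤ rankWeight K u + rankWeight K v := by
  have hle : span K (Set.range (u + v)) ≤ span K (Set.range u) ⊔ span K (Set.range v) :=
    span_le.mpr <| Set.range_subset_iff.mpr fun j =>
      add_mem_sup (subset_span (Set.mem_range_self j)) (subset_span (Set.mem_range_self j))
  exact (finrank_mono hle).trans (finrank_add_le_finrank_add_finrank _ _)

lemma rankWeight_smul_le (a : L) (v : Fin n → L) : rankWeight K (a • v) ≤ rankWeight K v := by
  have hrange : Set.range (a • v) = LinearMap.mulLeft K a '' Set.range v := by
    rw [← Set.range_comp]; rfl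
  rw [rankWeight, rankWeight, hrange, span_image]
  exact finrank_map_le _ _

lemma rankWeight_sum_le {ι : Type*} (s : Finset ι) (g : ι → Fin n → L) :
    rankWeight K (∑ i ∈ s, g i) ≤ ∑ i ∈ s, rankWeight K (g i) := by
  classical
  induction s using Finset.induction_on with
  | empty => simp [rankWeight_zero]
  | insert i s hi ih =>
    rw [Finset.sum_insert hi, Finset.sum_insert hi]
    exact (rankWeight_add_le _ _).trans (by omega)

lemma rankWeight_le_of_mem_span {s : Finset (Fin n → L)} {c : Fin n → L}
    (hc : c ∈ span L (s : Set (Fin n → L))) :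
    rankWeight K c ≤ ∑ v ∈ s, rankWeight K v := by
  obtain ⟨f, -, rfl⟩ := mem_span_finset.mp hc
  exact (rankWeight_sum_le s _).trans (Finset.sum_le_sum fun v _ => rankWeight_smul_le _ _)

end RankWeight

lemma finrank_le_sum_finrank_range {K V W ι : Type*} [Fintype ι] [Field K]
    [AddCommGroup V] [Module K V] [AddCommGroup W] [Module K W] [FiniteDimensional K W]
    (f : ι → V →ₗ[K] W) (hf : ∀ x, (∀ i, f i x = 0) → x = 0) :
    Module.finrank K V ≤ ∑ i, Module.finrank K (LinearMap.range (f i)) := by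
  have hinj : Function.Injective (LinearMap.pi fun i => (f i).rangeRestrict) := by
    rw [← LinearMap.ker_eq_bot, LinearMap.ker_eq_bot']
    exact fun x hx => hf x fun i => congr_arg Subtype.val (congr_fun hx i)
  exact (LinearMap.finrank_le_finrank_of_injective hinj).trans_eq (Module.finrank_pi_fintype K)

section Necessity

open Module Submodule

variable {K L : Type*} [Field K] [Field L] [Algebra K L] [FiniteDimensional K L] {n : ℕ}

lemma IsNondegenerate.le_sum_rankWeight {C : Submodule L (Fin n → L)} (hC : IsNondegenerate K C)
    {s : Finset (Fin n → L)} (hCs : C ≤ span L (s : Set (Fin n → L))) :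
    n ≤ ∑ v ∈ s, rankWeight K v := by
  have hbound := finrank_le_sum_finrank_range
    (fun v : s => Fintype.linearCombination K (v : Fin n → L)) fun x hx => by
      by_contra hx0
      obtain ⟨c, hc, hne⟩ := hC x hx0
      refine hne (span_induction (p := fun c _ => ∑ j, x j • c j = 0) (fun v hv => ?_) ?_
        (fun _ _ _ _ ha hb => ?_) (fun a _ _ h => ?_) (hCs hc))
      · simpa [Fintype.linearCombination_apply] using hx ⟨v, hv⟩
      · simp
      · simp only [Pi.add_apply, smul_add, Finset.sum_add_distrib, ha, hb, add_zero]
      · simp only [Pi.smul_apply, smul_eq_mul, ← mul_smul_comm, ← Finset.mul_sum, h, mul_zero]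
  rw [finrank_fin_fun] at hbound
  refine hbound.trans_eq ((Finset.sum_coe_sort s
    fun v => finrank K (LinearMap.range (Fintype.linearCombination K v))).trans
      (Finset.sum_congr rfl fun v _ => ?_))
  rw [Fintype.range_linearCombination, rankWeight]

lemma exists_linearIndepOn_sum_rankWeight_le {C : Submodule L (Fin n → L)} {m : ℕ}
    (hws : Set.Icc 1 m ⊆ weightSpectrum K C) :
    ∀ j, 2 ^ j ≤ 2 * m → ∃ s : Finset (Fin n → L), (s : Set (Fin n → L)) ⊆ C ∧
      LinearIndepOn L id (s : Set (Fin n → L)) ∧ s.card = j ∧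
      ∑ v ∈ s, rankWeight K v ≤ 2 ^ j - 1
  | 0, _ => ⟨∅, by simp, by simp, rfl, by simp⟩
  | j + 1, hj => by
    rw [pow_succ] at hj
    obtain ⟨s, hsC, hsind, hscard, hssum⟩ :=
      exists_linearIndepOn_sum_rankWeight_le hws j (by omega)
    obtain ⟨c, hcC, -, hcw⟩ :=
      hws (show 2 ^ j ∈ Set.Icc 1 m from ⟨Nat.one_le_two_pow, by omega⟩)
    have hcs : c ∉ span L (s : Set (Fin n → L)) := fun h => by
      have := rankWeight_le_of_mem_span (K := K) h
      have := Nat.one_le_two_pow (n := j)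
      omega
    classical
    refine ⟨insert c s, ?_, ?_, ?_, ?_⟩
    · simpa [Set.insert_subset_iff] using ⟨hcC, hsC⟩
    · simpa using hsind.insert (by simpa using hcs)
    · rw [Finset.card_insert_of_notMem fun h => hcs (subset_span h), hscard]
    · rw [Finset.sum_insert fun h => hcs (subset_span h), hcw, pow_succ]
      omega

lemma IsNondegenerate.le_of_Icc_subset_weightSpectrum {C : Submodule L (Fin n → L)}
    (hnd : IsNondegenerate K C) {m k r : ℕ} (hdeg : finrank K L = m) (hr : 2 ^ r ≤ m)
    (hk : finrank L C = k) (hws : Set.Icc 1 m ⊆ weightSpectrum K C) :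
    r + 1 ≤ k ∧ n ≤ (k - (r + 1)) * m + (2 ^ (r + 1) - 1) := by
  classical
  obtain ⟨s, hsC, hsind, hscard, hssum⟩ :=
    exists_linearIndepOn_sum_rankWeight_le hws (r + 1) (by rw [pow_succ]; omega)
  obtain ⟨b, hbC, hsb, hCb, hbind⟩ := exists_linearIndepOn_extension hsind hsC
  have : Finite b := hbind.finite
  set B := (Set.toFinite b).toFinset
  have hB : (B : Set (Fin n → L)) = b := Set.Finite.coe_toFinset _
  have hspan : span L (B : Set (Fin n → L)) = C := by
    rw [hB]
    exact le_antisymm (span_le.mpr hbC) (by simpa using hCb)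
  have hBcard : B.card = k := by
    rw [← hk, ← hspan, finrank_span_finset_eq_card (by rwa [hB])]
  have hsB : s ⊆ B := by rw [← Finset.coe_subset, hB]; exact hsb
  have hrest : ∑ v ∈ B \ s, rankWeight K v ≤ (k - (r + 1)) * m := by
    have := Finset.sum_le_card_nsmul (B \ s) (rankWeight K) m fun v _ =>
      hdeg ▸ rankWeight_le_finrank v
    rwa [Finset.card_sdiff_of_subset hsB, hBcard, hscard, smul_eq_mul] at this
  have hn := hnd.le_sum_rankWeight hspan.ge
  rw [← Finset.sum_sdiff hsB] at hn
  have := Finset.card_le_card hsB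
  omega

end Necessity

section Construction

open Module Submodule

variable {K L : Type*} [Field K] [Field L] [Algebra K L] {ι : Type*} {k n : ℕ}
  {e : ι → L} {A : Fin k → Finset ι}

/-- The coordinates of `L^n` are labelled, through `f`, by the pairs `(i, a)` with `a ∈ A i`;
the `i`-th row carries `e a` at the coordinates labelled `(i, a)` and vanishes elsewhere. -/
noncomputable def blockRow (e : ι → L) (f : Fin n ≃ (i : Fin k) × A i) (i : Fin k) :
    Fin n → L :=
  fun j => if (f j).1 = i then e (f j).2 else 0

variable (f : Fin n ≃ (i : Fin k) × A i)

lemma blockRow_symm_apply (i : Fin k) (p : (i : Fin k) × A i) :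
    blockRow e f i (f.symm p) = if p.1 = i then e p.2 else 0 := by
  rw [blockRow, f.apply_symm_apply]

lemma sum_blockRow_apply (S : Finset (Fin k)) (j : Fin n) :
    (∑ i ∈ S, blockRow e f i) j = if (f j).1 ∈ S then e (f j).2 else 0 := by
  simp [blockRow, Finset.sum_apply, Finset.sum_ite_eq]

lemma linearIndependent_blockRow (he : ∀ i, ∀ a ∈ A i, e a ≠ 0)
    (hne : ∀ i, (A i).Nonempty) :
    LinearIndependent L (blockRow e f) := by
  refine Fintype.linearIndependent_iff.mpr fun g hg i => ?_
  obtain ⟨a, ha⟩ := hne i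
  have hj := congr_fun hg (f.symm ⟨i, a, ha⟩)
  simp only [Finset.sum_apply, Pi.smul_apply, blockRow_symm_apply, smul_eq_mul, mul_ite,
    mul_zero, Finset.sum_ite_eq, Finset.mem_univ, if_true, Pi.zero_apply] at hj
  exact (mul_eq_zero.mp hj).resolve_right (he i a ha)

lemma isNondegenerate_span_blockRow {s : Set ι} (he : LinearIndepOn K e s)
    (hA : ∀ i, ↑(A i) ⊆ s) : IsNondegenerate K (span L (Set.range (blockRow e f))) := by
  intro x hx
  obtain ⟨j₀, hj₀⟩ := Function.ne_iff.mp hx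
  refine ⟨blockRow e f (f j₀).1, subset_span (Set.mem_range_self _), fun h => hj₀ ?_⟩
  have hsum : ∑ j, x j • blockRow e f (f j₀).1 j =
      ∑ a : A (f j₀).1, x (f.symm ⟨(f j₀).1, a⟩) • e a := by
    rw [← f.symm.sum_comp, Fintype.sum_sigma, Fintype.sum_eq_single (f j₀).1 fun i hi => ?_]
    · simp [blockRow_symm_apply]
    · simp [blockRow_symm_apply, hi]
  have hind : LinearIndependent K fun a : A (f j₀).1 => e a := he.mono (hA _)
  have := Fintype.linearIndependent_iff.mp hind _ (hsum ▸ h) (f j₀).2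
  rwa [Sigma.eta, Equiv.symm_apply_apply] at this

variable [DecidableEq ι]

lemma rankWeight_sum_blockRow {s : Set ι} (he : LinearIndepOn K e s) (hA : ∀ i, ↑(A i) ⊆ s)
    (S : Finset (Fin k)) : rankWeight K (∑ i ∈ S, blockRow e f i) = (S.biUnion A).card := by
  classical
  have heU : LinearIndepOn K e ↑(S.biUnion A) :=
    he.mono (by simpa using fun i _ => hA i)
  have hspan : span K (Set.range (∑ i ∈ S, blockRow e f i)) =
      span K ↑((S.biUnion A).image e) := by
    refine le_antisymm (span_le.mpr <| Set.range_subset_iff.mpr fun j => ?_)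
      (span_le.mpr fun y hy => ?_)
    · rw [sum_blockRow_apply]
      split_ifs with h
      · exact subset_span (Finset.mem_coe.mpr
          (Finset.mem_image_of_mem e (Finset.mem_biUnion.mpr ⟨_, h, (f j).2.2⟩)))
      · exact zero_mem _
    · obtain ⟨a, ha, rfl⟩ := Finset.mem_image.mp hy
      obtain ⟨i, hi, hai⟩ := Finset.mem_biUnion.mp ha
      refine subset_span ⟨f.symm ⟨i, a, hai⟩, ?_⟩
      simp [Finset.sum_apply, blockRow_symm_apply, hi]
  rw [rankWeight, hspan, finrank_span_finset_eq_card (by simpa using heU.id_image),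
    Finset.card_image_of_injOn heU.injOn]

lemma exists_code_of_family {s : Set ι} (he : LinearIndepOn K e s) (hA : ∀ i, ↑(A i) ⊆ s)
    (hne : ∀ i, (A i).Nonempty) (hn : ∑ i, (A i).card = n) :
    ∃ C : Submodule L (Fin n → L), finrank L C = k ∧ IsNondegenerate K C ∧
      ∀ S : Finset (Fin k), 0 < (S.biUnion A).card →
        (S.biUnion A).card ∈ weightSpectrum K C := by
  let f : Fin n ≃ (i : Fin k) × A i :=
    (Fintype.equivFinOfCardEq (by simp [Fintype.card_sigma, hn])).symm
  refine ⟨span L (Set.range (blockRow e f)), ?_, isNondegenerate_span_blockRow f he hA,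
    fun S hS => ⟨∑ i ∈ S, blockRow e f i, sum_mem fun i _ => subset_span ⟨i, rfl⟩, ?_,
      rankWeight_sum_blockRow f he hA S⟩⟩
  · rw [finrank_span_eq_card (linearIndependent_blockRow f
      (fun i a ha => he.ne_zero (hA i ha)) hne), Fintype.card_fin]
  · intro h0
    have := rankWeight_sum_blockRow f he hA S
    rw [h0, rankWeight_zero] at this
    exact hS.ne this

end Construction

lemma IsFWSDesign.exists_code {K L : Type*} [Field K] [Field L] [Algebra K L]
    [FiniteDimensional K L] {m n k : ℕ} {F : ℕ → Finset ℕ} (hF : IsFWSDesign m n k F)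
    (hdeg : Module.finrank K L = m) :
    ∃ C : Submodule L (Fin n → L), Module.finrank L C = k ∧ IsNondegenerate K C ∧
      weightSpectrum K C = Set.Icc 1 m := by
  let b := (Module.finBasis K L).reindex (finCongr hdeg)
  let e : ℕ → L := fun a => if h : a < m then b ⟨a, h⟩ else 0
  have he : LinearIndepOn K e (range m : Set ℕ) := by
    have hb : LinearIndepOn K (e ∘ Fin.val) Set.univ :=
      linearIndepOn_univ_iff.mpr (by convert b.linearIndependent; ext a; simp [e, a.2])
    simpa [Set.image_univ, Fin.range_val] using hb.image_of_comp
  obtain ⟨C, hCk, hCnd, hCw⟩ := exists_code_of_family (A := fun i : Fin k => F i) he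
    (fun i => by exact_mod_cast hF.subset_range i i.2) (fun i => hF.nonempty i i.2)
    (by rw [Fin.sum_univ_eq_sum_range (fun i => (F i).card), hF.sum_card])
  refine ⟨C, hCk, hCnd, (hdeg ▸ weightSpectrum_subset_Icc C).antisymm fun w hw => ?_⟩
  obtain ⟨T, hT, hcard⟩ := hF.exists_card_biUnion w hw
  have hTk : ∀ i ∈ T, i < k := fun i hi => mem_range.mp (hT hi)
  have hS : (T.attachFin hTk).biUnion (fun i => F i) = T.biUnion F := by
    rw [← image_biUnion, image_val_attachFin]
  exact hcard ▸ hS ▸ hCw _ (by rw [hS, hcard]; exact hw.1)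

lemma two_mul_sub_lt_two_pow_iff {m n k r t s : ℕ} (hr : 2 ^ r ≤ m) (hr' : m < 2 ^ (r + 1))
    (hs : s < m) (hn : n + t * m + s = k * m) (htk : t + 2 ≤ k) :
    2 * m - s < 2 ^ (t + 2) ↔ r + 1 ≤ k ∧ n ≤ (k - (r + 1)) * m + (2 ^ (r + 1) - 1) := by
  have hpow : 2 ^ (r + 1) = 2 ^ r * 2 := pow_succ 2 r
  have hsplit : ∀ j ≤ k, (k - j) * m + j * m = k * m := fun j hj => by
    rw [← add_mul, Nat.sub_add_cancel hj]
  rcases lt_trichotomy (t + 1) r with h | h | h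
  · have h1 : 2 ^ (t + 2) ≤ 2 ^ r := Nat.pow_le_pow_right two_pos h
    refine iff_of_false (by omega) fun ⟨hrk, hbound⟩ => ?_
    have h2 := hsplit (r + 1) hrk
    have h3 : (t + 3) * m ≤ (r + 1) * m := Nat.mul_le_mul_right m (by omega)
    have h4 : (t + 3) * m = t * m + 3 * m := by ring
    omega
  · have h2 := hsplit (r + 1) (by omega)
    have h3 : (r + 1) * m = t * m + 2 * m := by rw [← h]; ring
    have h4 : 2 ^ (t + 2) = 2 ^ (r + 1) := by rw [← h]
    omega
  · have h1 : 2 ^ (r + 2) ≤ 2 ^ (t + 2) := Nat.pow_le_pow_right two_pos (by omega)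
    have h2 := hsplit (r + 1) (by omega)
    have h3 : (r + 1) * m ≤ (t + 1) * m := Nat.mul_le_mul_right m (by omega)
    have h4 : (t + 1) * m = t * m + m := by ring
    rw [pow_succ, hpow] at h1
    omega

lemma sub_mul_lt_two_pow_iff {m n k r : ℕ} (hr : 2 ^ r ≤ m) (hr' : m < 2 ^ (r + 1))
    (hmn : m < n) (hkm : n ≤ k * m) :
    n - (k - (k * m - n) / m - 2) * m < 2 ^ ((k * m - n) / m + 2) ↔
      r + 1 ≤ k ∧ n ≤ (k - (r + 1)) * m + (2 ^ (r + 1) - 1) := by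
  have hm : 0 < m := lt_of_lt_of_le Nat.one_le_two_pow hr
  obtain ⟨t, ht⟩ : ∃ t, (k * m - n) / m = t := ⟨_, rfl⟩
  obtain ⟨s, hs⟩ : ∃ s, (k * m - n) % m = s := ⟨_, rfl⟩
  have hn : n + t * m + s = k * m := by
    have := Nat.div_add_mod' (k * m - n) m
    rw [ht, hs] at this
    omega
  have htk : t + 2 ≤ k := by
    have : (k * m - n) / m < k - 1 :=
      (Nat.div_lt_iff_lt_mul hm).mpr (by rw [Nat.sub_one_mul]; omega)
    omega
  have ha : n - (k - t - 2) * m = 2 * m - s := by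
    have h1 : (k - t - 2) * m + (t + 2) * m = k * m := by
      rw [← add_mul, show k - t - 2 + (t + 2) = k by omega]
    have h2 : (t + 2) * m = t * m + 2 * m := by ring
    have h3 : s < m := hs ▸ Nat.mod_lt _ hm
    omega
  rw [ht, ha]
  exact two_mul_sub_lt_two_pow_iff hr hr' (hs ▸ Nat.mod_lt _ hm) hn htk

theorem exists_FWS_iff_of_gt_general (m n k t a : ℕ)
    (hkn : k < n) (hmn : m < n) (hkm : n ≤ k * m)
    (ht : t = (k * m - n) / m) (ha : a = n - (k - t - 2) * m)
    (K L : Type) [Field K] [Field L] [Algebra K L]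
    (hdeg : Module.finrank K L = m) :
    (∃ C : Submodule L (Fin n → L), Module.finrank L C = k ∧ IsNondegenerate K C ∧
        weightSpectrum K C = Set.Icc 1 m) ↔ a < 2 ^ (t + 2) := by
  have hm : m ≠ 0 := by rintro rfl; omega
  have : FiniteDimensional K L := Module.finite_of_finrank_pos (by omega)
  have hr := Nat.pow_log_le_self 2 hm
  have hr' := Nat.lt_pow_succ_log_self one_lt_two m
  rw [ha, ht, sub_mul_lt_two_pow_iff hr hr' hmn hkm]
  constructor
  · rintro ⟨C, hCk, hnd, hws⟩
    exact hnd.le_of_Icc_subset_weightSpectrum hdeg hr hCk hws.ge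
  · rintro ⟨hrk, hn⟩
    obtain ⟨F, hF⟩ := exists_isFWSDesign hr hr' hrk hkn.le hmn.le hn
    exact hF.exists_code hdeg

/-- Characterization of full weight spectrum codes, case n > m: a nondegenerate FWS
[n,k]_{q^m/q} code (one with weight spectrum {1,…,m}) exists if and only if a < 2^{t+2},
where t = ⌊(km−n)/m⌋ and a = n − (k−t−2)m. -/
theorem exists_FWS_iff_of_gt (q m n k t a : ℕ) (hq : IsPrimePow q)
    (hk : 1 < k) (hkn : k < n) (hmn : m < n) (hkm : n ≤ k * m)
    (ht : t = (k * m - n) / m) (ha : a = n - (k - t - 2) * m)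
    (K L : Type) [Field K] [Fintype K] [Field L] [Algebra K L]
    (hcard : Fintype.card K = q) (hdeg : Module.finrank K L = m) :
    (∃ C : Submodule L (Fin n → L), Module.finrank L C = k ∧ IsNondegenerate K C ∧
        weightSpectrum K C = Set.Icc 1 m) ↔ a < 2 ^ (t + 2) :=
  exists_FWS_iff_of_gt_general m n k t a hkn hmn hkm ht ha K L hdeg
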